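/- arXiv:2502.16552 — 4 statements merged into one kernel-verified Lean document; each statement's English description precedes it below -/
import Mathlib

section
/- Define g(p) := (λ/p) ∫_{ℝ^d} [1 − exp(−μ p ∫_{ℝ^d} f(‖v‖) f(‖u−v‖) dv)] du for p ∈ (0,1]. Then g is monotonically non-increasing in p, and lim_{p→0⁺} g(p) = λμ (∫_{ℝ^d} f(‖x‖) dx)². -/
/-!
Write `h u = μ ∫ f(‖v‖) f(‖u - v‖) dv`, a nonnegative integrable function (a convolution) with
`∫ h = μ (∫ f(‖x‖) dx)²`. Then `g p = λ ∫ (1 - exp (-p h u)) / p du`. Since `p ↦ 1 - exp (-p t)` is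
concave and vanishes at `0`, its secant slope `(1 - exp (-p t)) / p` decreases in `p` and tends to
`t` as `p → 0⁺`; it is bounded by `t`, so dominated convergence passes to the limit under the
integral.
-/

open MeasureTheory Filter Set Real Topology

lemma concaveOn_one_sub_exp_neg_mul (t : ℝ) :
    ConcaveOn ℝ univ (fun p : ℝ => 1 - exp (-(p * t))) := by
  refine ⟨convex_univ, fun x _ y _ a b ha hb hab => ?_⟩
  have hexp := convexOn_exp.2 (mem_univ (-(x * t))) (mem_univ (-(y * t))) ha hb hab
  simp only [smul_eq_mul] at hexp ⊢
  rw [show -((a * x + b * y) * t) = a * -(x * t) + b * -(y * t) by ring]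
  linear_combination hexp + hab

lemma antitoneOn_one_sub_exp_neg_mul_div (t : ℝ) :
    AntitoneOn (fun p : ℝ => (1 - exp (-(p * t))) / p) (Ioi 0) := by
  refine ((concaveOn_one_sub_exp_neg_mul t).slope_anti (mem_univ 0)).mono
    (fun p hp => ⟨mem_univ p, hp.ne'⟩) |>.congr fun p _ => ?_
  simp [slope_def_field]

lemma tendsto_one_sub_exp_neg_mul_div (t : ℝ) :
    Tendsto (fun p : ℝ => (1 - exp (-(p * t))) / p) (𝓝[>] 0) (𝓝 t) := by
  have hderiv : HasDerivAt (fun p : ℝ => 1 - exp (-(p * t))) t 0 := by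
    simpa using (((hasDerivAt_id (0 : ℝ)).mul_const t).neg.exp).const_sub 1
  simpa [div_eq_inv_mul] using hderiv.tendsto_slope_zero_right

lemma norm_one_sub_exp_neg_mul_div_le {p t : ℝ} (hp : 0 < p) (ht : 0 ≤ t) :
    ‖(1 - exp (-(p * t))) / p‖ ≤ t := by
  have hpt : 0 ≤ p * t := mul_nonneg hp.le ht
  have hnonneg : 0 ≤ 1 - exp (-(p * t)) := by
    linarith [exp_le_one_iff.2 (neg_nonpos.2 hpt)]
  rw [norm_of_nonneg (div_nonneg hnonneg hp.le), div_le_iff₀ hp]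
  linarith [one_sub_le_exp_neg (p * t)]

section Integral

variable {α : Type*} [MeasurableSpace α] {ν : Measure α} {h : α → ℝ}

lemma aestronglyMeasurable_one_sub_exp_neg_mul_div (hh : AEStronglyMeasurable h ν) (p : ℝ) :
    AEStronglyMeasurable (fun u => (1 - exp (-(p * h u))) / p) ν :=
  (by fun_prop : Continuous fun t : ℝ => (1 - exp (-(p * t))) / p).comp_aestronglyMeasurable hh

lemma integrable_one_sub_exp_neg_mul_div (hint : Integrable h ν) (hnonneg : 0 ≤ᵐ[ν] h)
    {p : ℝ} (hp : 0 < p) : Integrable (fun u => (1 - exp (-(p * h u))) / p) ν :=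
  hint.mono' (aestronglyMeasurable_one_sub_exp_neg_mul_div hint.1 p) <| by
    filter_upwards [hnonneg] with u hu using norm_one_sub_exp_neg_mul_div_le hp hu

lemma antitoneOn_integral_one_sub_exp_neg_mul_div (hint : Integrable h ν) (hnonneg : 0 ≤ᵐ[ν] h) :
    AntitoneOn (fun p => ∫ u, (1 - exp (-(p * h u))) / p ∂ν) (Ioi 0) := fun _ hp _ hq hpq =>
  integral_mono (integrable_one_sub_exp_neg_mul_div hint hnonneg hq)
    (integrable_one_sub_exp_neg_mul_div hint hnonneg hp)
    fun u => antitoneOn_one_sub_exp_neg_mul_div (h u) hp hq hpq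

lemma tendsto_integral_one_sub_exp_neg_mul_div (hint : Integrable h ν) (hnonneg : 0 ≤ᵐ[ν] h) :
    Tendsto (fun p => ∫ u, (1 - exp (-(p * h u))) / p ∂ν) (𝓝[>] 0) (𝓝 (∫ u, h u ∂ν)) := by
  refine tendsto_integral_filter_of_dominated_convergence h
    (Eventually.of_forall (aestronglyMeasurable_one_sub_exp_neg_mul_div hint.1)) ?_ hint
    (ae_of_all _ fun u => tendsto_one_sub_exp_neg_mul_div (h u))
  filter_upwards [self_mem_nhdsWithin] with p hp
  filter_upwards [hnonneg] with u hu using norm_one_sub_exp_neg_mul_div_le hp hu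

end Integral

section Convolution

variable {G : Type*} [AddGroup G] [MeasurableSpace G] [MeasurableAdd₂ G] [MeasurableNeg G]
  {μ : Measure G} [SFinite μ] [μ.IsAddRightInvariant] {F₁ F₂ : G → ℝ}

lemma integrable_integral_mul_sub (h₁ : Integrable F₁ μ) (h₂ : Integrable F₂ μ) :
    Integrable (fun u => ∫ v, F₁ v * F₂ (u - v) ∂μ) μ :=
  h₁.integrable_convolution (ContinuousLinearMap.mul ℝ ℝ) h₂

lemma integral_integral_mul_sub (h₁ : Integrable F₁ μ) (h₂ : Integrable F₂ μ) :
    ∫ u, ∫ v, F₁ v * F₂ (u - v) ∂μ ∂μ = (∫ v, F₁ v ∂μ) * ∫ v, F₂ v ∂μ :=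
  integral_convolution (ContinuousLinearMap.mul ℝ ℝ) h₁ h₂

end Convolution

theorem dispersed_mean_M_monotone_limit_general
    (d : ℕ) (lam mu : ℝ) (hlam : 0 < lam) (hmu : 0 < mu)
    (f : ℝ → ℝ) (hf01 : ∀ r, f r ∈ Set.Icc (0 : ℝ) 1)
    (hint : Integrable fun x : EuclideanSpace ℝ (Fin d) => f ‖x‖)
    (g : ℝ → ℝ)
    (hg : ∀ p, g p = (lam / p) * ∫ u : EuclideanSpace ℝ (Fin d),
        (1 - Real.exp (-(mu * p) *
          ∫ v : EuclideanSpace ℝ (Fin d), f ‖v‖ * f ‖u - v‖ ∂volume)) ∂volume) :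
    AntitoneOn g (Set.Ioc (0 : ℝ) 1) ∧
    Tendsto g (nhdsWithin 0 (Set.Ioi 0))
      (nhds (lam * mu * (∫ x : EuclideanSpace ℝ (Fin d), f ‖x‖ ∂volume) ^ 2)) := by
  set h : EuclideanSpace ℝ (Fin d) → ℝ := fun u => mu * ∫ v, f ‖v‖ * f ‖u - v‖
  have h_int : Integrable h := (integrable_integral_mul_sub hint hint).const_mul mu
  have h_nonneg : 0 ≤ᵐ[volume] h := ae_of_all _ fun u =>
    mul_nonneg hmu.le (integral_nonneg fun v => mul_nonneg (hf01 _).1 (hf01 _).1)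
  have hg' : g = fun p => lam * ∫ u, (1 - exp (-(p * h u))) / p := by
    ext p
    simp only [hg, integral_div, h, neg_mul, mul_assoc, mul_left_comm p mu]
    ring
  rw [hg']
  have h_anti := antitoneOn_integral_one_sub_exp_neg_mul_div h_int h_nonneg
  refine ⟨fun p hp q hq hpq => mul_le_mul_of_nonneg_left
    (h_anti (Ioc_subset_Ioi_self hp) (Ioc_subset_Ioi_self hq) hpq) hlam.le, ?_⟩
  convert (tendsto_integral_one_sub_exp_neg_mul_div h_int h_nonneg).const_mul lam using 2
  rw [integral_const_mul, integral_integral_mul_sub hint hint]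
  ring

/-- With `g(p) = (λ/p) ∫_{ℝ^d} [1 − exp(−μ p ∫_{ℝ^d} f(‖v‖)f(‖u−v‖) dv)] du`
for `p ∈ (0,1]`, the function `g` is monotonically non-increasing in `p`, and
`g(p) → λ μ (∫_{ℝ^d} f(‖x‖) dx)²` as `p → 0⁺`. -/
theorem dispersed_mean_M_monotone_limit
    (d : ℕ) (hd : 0 < d) (lam mu : ℝ) (hlam : 0 < lam) (hmu : 0 < mu)
    (f : ℝ → ℝ) (hf : Measurable f) (hf01 : ∀ r, f r ∈ Set.Icc (0 : ℝ) 1)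
    (hint : Integrable fun x : EuclideanSpace ℝ (Fin d) => f ‖x‖)
    (g : ℝ → ℝ)
    (hg : ∀ p, g p = (lam / p) * ∫ u : EuclideanSpace ℝ (Fin d),
        (1 - Real.exp (-(mu * p) *
          ∫ v : EuclideanSpace ℝ (Fin d), f ‖v‖ * f ‖u - v‖ ∂volume)) ∂volume) :
    AntitoneOn g (Set.Ioc (0 : ℝ) 1) ∧
    Tendsto g (nhdsWithin 0 (Set.Ioi 0))
      (nhds (lam * mu * (∫ x : EuclideanSpace ℝ (Fin d), f ‖x‖ ∂volume) ^ 2)) :=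
  dispersed_mean_M_monotone_limit_general d lam mu hlam hmu f hf01 hint g hg
end

section
/- For the connection function f₁(r) = 1_{r ≤ θ} in ℝ², the expected number of agents connected to the origin is E[M] = ∫₀^{2θ} 2πλ v (1 − exp(−μ(2θ² arccos(v/(2θ)) − v√(θ² − v²/4)))) dv. -/
/-!
A reflection of the plane fixing the origin and moving `x` to `‖x‖ e₀` preserves Lebesgue
measure, so the integrand depends on `x` only through `r = ‖x‖`, and polar coordinates turn the
integral into `2π ∫ r F(r) dr`. The two disks are disjoint once `r > 2θ`; for `r ≤ 2θ`, Fubini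
over vertical slices computes the lens area as twice the circular segment
`∫_{r/2}^θ 2√(θ² - t²) dt`, which integrates in closed form with `arccos`.
-/

open MeasureTheory Real Metric Set

section Rotation

variable {E : Type*} [NormedAddCommGroup E] [InnerProductSpace ℝ E] [FiniteDimensional ℝ E]
  [MeasurableSpace E] [BorelSpace E]

theorem volume_closedBall_inter_closedBall_zero_congr {x y : E} (h : ‖x‖ = ‖y‖) (r s : ℝ) :
    volume (closedBall x r ∩ closedBall (0 : E) s) =
      volume (closedBall y r ∩ closedBall (0 : E) s) := by
  set ρ := (ℝ ∙ (x - y))ᗮ.reflection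
  have hy : ρ y = x := by
    rw [← Submodule.reflection_sub h]
    exact Submodule.reflection_reflection _ _
  have hρ : ρ ⁻¹' (closedBall y r ∩ closedBall 0 s) = closedBall x r ∩ closedBall 0 s := by
    rw [preimage_inter, ρ.preimage_closedBall, ρ.preimage_closedBall, Submodule.reflection_symm,
      hy, map_zero]
  rw [← hρ, ρ.measurePreserving.measure_preimage
    (measurableSet_closedBall.inter measurableSet_closedBall).nullMeasurableSet]

end Rotation

theorem integral_fun_norm_euclideanSpace_fin_two (f : ℝ → ℝ) :
    ∫ x : EuclideanSpace ℝ (Fin 2), f ‖x‖ = 2 * π * ∫ r in Ioi 0, r * f r := by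
  simpa [finrank_euclideanSpace_fin, measureReal_def, mul_assoc, pi_nonneg] using
    integral_fun_norm_addHaar (volume : Measure (EuclideanSpace ℝ (Fin 2))) f

theorem hasDerivAt_antideriv_sqrt_sq_sub_sq {r t : ℝ} (ht : |t| < r) :
    HasDerivAt (fun t => (t * √(r ^ 2 - t ^ 2) - r ^ 2 * arccos (t / r)) / 2)
      √(r ^ 2 - t ^ 2) t := by
  have hr : 0 < r := (abs_nonneg t).trans_lt ht
  have hpos : 0 < r ^ 2 - t ^ 2 := by nlinarith [sq_abs t, abs_nonneg t]
  obtain ⟨htr₁, htr₂⟩ := abs_lt.1 ht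
  have hsqrt : HasDerivAt (fun t => √(r ^ 2 - t ^ 2)) (-(2 * t) / (2 * √(r ^ 2 - t ^ 2))) t :=
    (((hasDerivAt_pow 2 t).const_sub (r ^ 2)).congr_deriv (by ring)).sqrt hpos.ne'
  have harccos : HasDerivAt (fun t => arccos (t / r)) (-(1 / √(1 - (t / r) ^ 2)) * (1 / r)) t :=
    (hasDerivAt_arccos (by rw [ne_eq, div_eq_iff hr.ne']; linarith)
      (by rw [ne_eq, div_eq_iff hr.ne']; linarith)).comp t ((hasDerivAt_id t).div_const r)
  have hscale : √(1 - (t / r) ^ 2) = √(r ^ 2 - t ^ 2) / r := by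
    rw [← sqrt_sq hr.le, ← sqrt_div' _ (sq_nonneg r), sqrt_sq hr.le]
    congr 1
    field_simp
  refine ((((hasDerivAt_id t).mul hsqrt).sub (harccos.const_mul (r ^ 2))).div_const 2).congr_deriv ?_
  rw [hscale, id]
  have := sq_sqrt hpos.le
  field_simp
  linear_combination -this

theorem integral_sqrt_sq_sub_sq {r a : ℝ} (ha : -r ≤ a) (har : a ≤ r) :
    ∫ t in a..r, √(r ^ 2 - t ^ 2) = (r ^ 2 * arccos (a / r) - a * √(r ^ 2 - a ^ 2)) / 2 := by
  have hr : r ^ 2 * arccos (r / r) = 0 := by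
    rcases eq_or_ne r 0 with rfl | hr
    · simp
    · rw [div_self hr, arccos_one, mul_zero]
  rw [intervalIntegral.integral_eq_sub_of_hasDerivAt_of_le har (by fun_prop)
    (fun t ht => hasDerivAt_antideriv_sqrt_sq_sub_sq (abs_lt.2 ⟨ha.trans_lt ht.1, ht.2⟩))
    (by apply Continuous.intervalIntegrable; fun_prop), sub_self, sqrt_zero, hr]
  ring

theorem volume_setOf_sq_le (m : ℝ) : volume {y : ℝ | y ^ 2 ≤ m} = ENNReal.ofReal (2 * √m) := by
  rcases lt_or_ge m 0 with hm | hm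
  · have : {y : ℝ | y ^ 2 ≤ m} = ∅ := eq_empty_of_forall_notMem fun y hy => by
      nlinarith [sq_nonneg y, hy.out]
    rw [this, sqrt_eq_zero_of_nonpos hm.le]
    simp
  · have : {y : ℝ | y ^ 2 ≤ m} = Icc (-√m) √m := by
      ext y
      exact sq_le hm
    rw [this, volume_Icc]
    ring_nf

theorem volume_setOf_snd_sq_le {g : ℝ → ℝ} (hg : Measurable g) :
    volume {p : ℝ × ℝ | p.2 ^ 2 ≤ g p.1} = ∫⁻ x, ENNReal.ofReal (2 * √(g x)) := by
  rw [Measure.volume_eq_prod, Measure.prod_apply (measurableSet_le (by fun_prop) (by fun_prop))]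
  exact lintegral_congr fun x => volume_setOf_sq_le (g x)

noncomputable def lensArea (θ v : ℝ) : ℝ :=
  2 * θ ^ 2 * arccos (v / (2 * θ)) - v * √(θ ^ 2 - v ^ 2 / 4)

section Lens

variable {θ v : ℝ}

theorem sqrt_min_eq_zero_of_notMem_Ioc (hθ : 0 ≤ θ) {x : ℝ} (hx : x ∉ Ioc (v - θ) θ) :
    √(min (θ ^ 2 - (x - v) ^ 2) (θ ^ 2 - x ^ 2)) = 0 := by
  refine sqrt_eq_zero_of_nonpos ?_
  rw [mem_Ioc, not_and_or, not_lt, not_le] at hx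
  rcases hx with hx | hx
  · exact (min_le_left _ _).trans (by nlinarith)
  · exact (min_le_right _ _).trans (by nlinarith)

theorem integral_sqrt_min_eq_lensArea (hv : 0 ≤ v) (hvθ : v ≤ 2 * θ) :
    ∫ x, 2 * √(min (θ ^ 2 - (x - v) ^ 2) (θ ^ 2 - x ^ 2)) = lensArea θ v := by
  set g : ℝ → ℝ := fun x => 2 * √(min (θ ^ 2 - (x - v) ^ 2) (θ ^ 2 - x ^ 2)) with hg
  have hgc : Continuous g := by fun_prop
  have hright : ∫ x in v / 2..θ, g x = 2 * ∫ t in v / 2..θ, √(θ ^ 2 - t ^ 2) := by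
    rw [← intervalIntegral.integral_const_mul]
    refine intervalIntegral.integral_congr fun x hx => ?_
    rw [uIcc_of_le (by linarith)] at hx
    simp only [hg, min_eq_right (by nlinarith [hx.1] : θ ^ 2 - x ^ 2 ≤ θ ^ 2 - (x - v) ^ 2)]
  have hleft : ∫ x in v - θ..v / 2, g x = 2 * ∫ t in v / 2..θ, √(θ ^ 2 - t ^ 2) := by
    have hreflect : EqOn g (fun x => 2 * √(θ ^ 2 - (v - x) ^ 2)) (uIcc (v - θ) (v / 2)) := by
      intro x hx
      rw [uIcc_of_le (by linarith)] at hx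
      simp only [hg, min_eq_left (by nlinarith [hx.2] : θ ^ 2 - (x - v) ^ 2 ≤ θ ^ 2 - x ^ 2)]
      ring_nf
    rw [intervalIntegral.integral_congr hreflect,
      intervalIntegral.integral_comp_sub_left (fun t => 2 * √(θ ^ 2 - t ^ 2)),
      intervalIntegral.integral_const_mul]
    ring_nf
  calc ∫ x, g x = ∫ x in v - θ..θ, g x := by
        rw [intervalIntegral.integral_of_le (by linarith),
          setIntegral_eq_integral_of_forall_compl_eq_zero fun x hx => by
            simp only [hg, sqrt_min_eq_zero_of_notMem_Ioc (by linarith) hx, mul_zero]]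
    _ = (∫ x in v - θ..v / 2, g x) + ∫ x in v / 2..θ, g x :=
        (intervalIntegral.integral_add_adjacent_intervals
          (hgc.intervalIntegrable _ _) (hgc.intervalIntegrable _ _)).symm
    _ = lensArea θ v := by
        rw [hleft, hright, integral_sqrt_sq_sub_sq (by linarith) (by linarith), lensArea]
        ring_nf

theorem lensArea_nonneg (hv : 0 ≤ v) (hvθ : v ≤ 2 * θ) : 0 ≤ lensArea θ v :=
  integral_sqrt_min_eq_lensArea hv hvθ ▸ integral_nonneg fun _ => by positivity

theorem volume_lens_prod (hv : 0 ≤ v) (hvθ : v ≤ 2 * θ) :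
    volume {p : ℝ × ℝ | (p.1 - v) ^ 2 + p.2 ^ 2 ≤ θ ^ 2 ∧ p.1 ^ 2 + p.2 ^ 2 ≤ θ ^ 2} =
      ENNReal.ofReal (lensArea θ v) := by
  have hθ : 0 ≤ θ := by linarith
  have hslices : {p : ℝ × ℝ | (p.1 - v) ^ 2 + p.2 ^ 2 ≤ θ ^ 2 ∧ p.1 ^ 2 + p.2 ^ 2 ≤ θ ^ 2} =
      {p | p.2 ^ 2 ≤ min (θ ^ 2 - (p.1 - v) ^ 2) (θ ^ 2 - p.1 ^ 2)} := by
    ext p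
    simp only [mem_ofPred_eq, le_min_iff, le_sub_iff_add_le']
  have hint : Integrable fun x => 2 * √(min (θ ^ 2 - (x - v) ^ 2) (θ ^ 2 - x ^ 2)) := by
    refine Continuous.integrable_of_hasCompactSupport (by fun_prop) <|
      HasCompactSupport.intro (isCompact_Icc (a := v - θ) (b := θ)) fun x hx => ?_
    rw [sqrt_min_eq_zero_of_notMem_Ioc hθ fun h => hx (Ioc_subset_Icc_self h), mul_zero]
  rw [hslices,
    volume_setOf_snd_sq_le (g := fun x => min (θ ^ 2 - (x - v) ^ 2) (θ ^ 2 - x ^ 2)) (by fun_prop),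
    ← ofReal_integral_eq_lintegral_ofReal hint (.of_forall fun _ => by positivity),
    integral_sqrt_min_eq_lensArea hv hvθ]

theorem volume_closedBall_single_inter_closedBall (hv : 0 ≤ v) (hvθ : v ≤ 2 * θ) :
    volume (closedBall (EuclideanSpace.single 0 v) θ ∩
        closedBall (0 : EuclideanSpace ℝ (Fin 2)) θ) = ENNReal.ofReal (lensArea θ v) := by
  have hθ : 0 ≤ θ := by linarith
  have hcoord : MeasurePreserving (fun x : EuclideanSpace ℝ (Fin 2) => (x 0, x 1)) :=
    (volume_preserving_finTwoArrow ℝ).comp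
      (EuclideanSpace.volume_preserving_symm_measurableEquiv_toLp _)
  have hpre : closedBall (EuclideanSpace.single 0 v) θ ∩
        closedBall (0 : EuclideanSpace ℝ (Fin 2)) θ =
      (fun x : EuclideanSpace ℝ (Fin 2) => (x 0, x 1)) ⁻¹'
        {p : ℝ × ℝ | (p.1 - v) ^ 2 + p.2 ^ 2 ≤ θ ^ 2 ∧ p.1 ^ 2 + p.2 ^ 2 ≤ θ ^ 2} := by
    ext x
    simp only [mem_inter_iff, mem_closedBall, EuclideanSpace.dist_eq, sqrt_le_left hθ,
      Fin.sum_univ_two, mem_preimage, mem_ofPred_eq]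
    simp [Real.dist_eq]
  rw [hpre, hcoord.measure_preimage (by measurability), volume_lens_prod hv hvθ]

end Lens

theorem mean_M_disk_general
    (lam mu θ : ℝ)
    (EM : ℝ)
    (hEM : EM = lam * ∫ x : EuclideanSpace ℝ (Fin 2),
        (1 - Real.exp (-mu *
          (volume (Metric.closedBall x θ ∩
            Metric.closedBall (0 : EuclideanSpace ℝ (Fin 2)) θ)).toReal)) ∂volume) :
    EM = ∫ v in Set.Ioc (0 : ℝ) (2 * θ),
        2 * π * lam * v *
          (1 - Real.exp (-mu *
            (2 * θ ^ 2 * Real.arccos (v / (2 * θ)) - v * Real.sqrt (θ ^ 2 - v ^ 2 / 4)))) := by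
  set F : ℝ → ℝ := fun r => 1 - exp (-mu * (volume (closedBall (EuclideanSpace.single 0 r) θ ∩
    closedBall (0 : EuclideanSpace ℝ (Fin 2)) θ)).toReal)
  have hradial (x : EuclideanSpace ℝ (Fin 2)) :
      1 - exp (-mu * (volume (closedBall x θ ∩ closedBall 0 θ)).toReal) = F ‖x‖ := by
    rw [volume_closedBall_inter_closedBall_zero_congr (y := EuclideanSpace.single 0 ‖x‖) (by simp)]
  have hlens : ∀ r ∈ Ioc 0 (2 * θ), F r = 1 - exp (-mu * lensArea θ r) := fun r hr => by
    simp only [F, volume_closedBall_single_inter_closedBall hr.1.le hr.2,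
      ENNReal.toReal_ofReal (lensArea_nonneg hr.1.le hr.2)]
  have hfar : ∀ r ∈ Ioi 0 \ Ioc 0 (2 * θ), r * F r = 0 := fun r ⟨(hr₀ : 0 < r), hr⟩ => by
    have hdisj : Disjoint (closedBall (EuclideanSpace.single 0 r) θ)
        (closedBall (0 : EuclideanSpace ℝ (Fin 2)) θ) :=
      closedBall_disjoint_closedBall <| by
        simpa [← two_mul, abs_of_pos hr₀] using lt_of_not_ge fun h => hr ⟨hr₀, h⟩
    simp [F, hdisj.inter_eq]
  rw [hEM, integral_congr_ae (.of_forall hradial), integral_fun_norm_euclideanSpace_fin_two,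
    setIntegral_eq_of_subset_of_forall_sdiff_eq_zero measurableSet_Ioi Ioc_subset_Ioi_self hfar,
    setIntegral_congr_fun measurableSet_Ioc fun r hr => by rw [hlens r hr],
    ← integral_const_mul, ← integral_const_mul]
  congr 1
  ext r
  rw [lensArea]
  ring

/-- For the Boolean connection function `f₁(r) = 1_{r ≤ θ}` in `ℝ²`, the expected
number of agents connected to the origin,
`E M = λ ∫_{ℝ²} (1 − e^{−μ·area(B(x,θ) ∩ B(0,θ))}) dx`, equals
`∫₀^{2θ} 2πλ v (1 − exp(−μ(2θ² arccos(v/(2θ)) − v √(θ² − v²/4)))) dv`. -/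
theorem mean_M_disk
    (lam mu θ : ℝ) (hlam : 0 < lam) (hmu : 0 < mu) (hθ : 0 < θ)
    (EM : ℝ)
    (hEM : EM = lam * ∫ x : EuclideanSpace ℝ (Fin 2),
        (1 - Real.exp (-mu *
          (volume (Metric.closedBall x θ ∩
            Metric.closedBall (0 : EuclideanSpace ℝ (Fin 2)) θ)).toReal)) ∂volume) :
    EM = ∫ v in Set.Ioc (0 : ℝ) (2 * θ),
        2 * π * lam * v *
          (1 - Real.exp (-mu *
            (2 * θ ^ 2 * Real.arccos (v / (2 * θ)) - v * Real.sqrt (θ ^ 2 - v ^ 2 / 4)))) :=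
  mean_M_disk_general lam mu θ EM hEM
end

section
/- For a stationary Poisson point process Ψ on ℝ² with intensity μ and a fixed point x ∈ ℝ², the point process {‖y‖ + ‖x − y‖ : y ∈ Ψ} on the real line is a Poisson point process on [‖x‖, ∞) with intensity function λ_x(r) = (μπ/4)(2r² − ‖x‖²)/√(r² − ‖x‖²) for r > ‖x‖. -/
open MeasureTheory Real
open scoped ENNReal NNReal

/-- `negExp t = e^{-t}` for `t : ℝ≥0∞`, with `e^{-∞} = 0`. -/
noncomputable def negExp (t : ℝ≥0∞) : ℝ≥0∞ :=
  if t = ⊤ then 0 else ENNReal.ofReal (Real.exp (-t.toReal))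

/-- A random counting measure `N` on `E` is a Poisson point process with intensity measure `Λ`
iff its Laplace functional satisfies `E[exp(−∫ g dN)] = exp(−∫ (1 − e^{−g}) dΛ)` for all
measurable `g ≥ 0`. -/
def IsPoissonPP {Ω E : Type*} [MeasurableSpace Ω] [MeasurableSpace E]
    (P : Measure Ω) (N : Ω → Measure E) (Λ : Measure E) : Prop :=
  ∀ g : E → ℝ≥0∞, Measurable g →
    ∫⁻ ω, negExp (∫⁻ y, g y ∂(N ω)) ∂P = negExp (∫⁻ y, (1 - negExp (g y)) ∂Λ)

/-!
The map `f y = ‖y‖ + ‖x - y‖` pushes the Poisson process forward to a Poisson process whose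
intensity is the image measure `(μ • volume).map f`, since the Laplace functional of the image
process is that of `Ψ` evaluated at `g ∘ f`. That image measure is determined by its values on
half-lines: `f ⁻¹' Iic r` is the region bounded by the ellipse with foci `0`, `x` and major axis `r`,
whose area `π r √(r² - ‖x‖²) / 4` is read off after a reflection moves `x` onto the first axis
and a diagonal linear map sends the ellipse to the unit disc. By the fundamental theorem of
calculus this is also `∫ λ_x` over `(‖x‖, r]`, as `λ_x` is the derivative of the area.
-/

open Set Filter Topology

theorem measurable_negExp : Measurable negExp :=
  Measurable.ite (measurableSet_singleton ⊤) measurable_const (by fun_prop)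

theorem IsPoissonPP.map {Ω E F : Type*} [MeasurableSpace Ω] [MeasurableSpace E]
    [MeasurableSpace F] {P : Measure Ω} {N : Ω → Measure E} {Λ : Measure E}
    (h : IsPoissonPP P N Λ) {f : E → F} (hf : Measurable f) :
    IsPoissonPP P (fun ω => (N ω).map f) (Λ.map f) := by
  intro g hg
  have hg' : Measurable fun y => 1 - negExp (g y) := (measurable_negExp.comp hg).const_sub 1
  simp_rw [lintegral_map hg hf]
  rw [lintegral_map hg' hf]
  exact h _ (hg.comp hf)

theorem MeasureTheory.Measure.ext_of_Iic' {μ ν : Measure ℝ} (hμ : ∀ r, μ (Iic r) ≠ ∞)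
    (h : ∀ r, μ (Iic r) = ν (Iic r)) : μ = ν :=
  ext_of_generateFrom_of_iUnion (range Iic) (fun n : ℕ => Iic (n : ℝ))
    (BorelSpace.measurable_eq.trans (borel_eq_generateFrom_Iic ℝ)) isPiSystem_Iic
    (iUnion_eq_univ_iff.2 fun r => exists_nat_ge r) (fun _ => mem_range_self _) (fun n => hμ n)
    (by rintro _ ⟨r, rfl⟩; exact h r)

theorem lintegral_ofReal_deriv_eq_sub {f f' : ℝ → ℝ} {a b : ℝ} (hab : a ≤ b)
    (hcont : ContinuousOn f (Icc a b)) (hderiv : ∀ x ∈ Ioo a b, HasDerivAt f (f' x) x)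
    (hpos : ∀ x ∈ Ioo a b, 0 ≤ f' x) :
    ∫⁻ x in Ioc a b, ENNReal.ofReal (f' x) = ENNReal.ofReal (f b - f a) := by
  have hint : IntegrableOn f' (Ioc a b) :=
    intervalIntegral.integrableOn_deriv_of_nonneg hcont hderiv hpos
  rw [setLIntegral_congr Ioo_ae_eq_Ioc.symm, ← ofReal_integral_eq_lintegral_ofReal
    (hint.mono_set Ioo_subset_Ioc_self) (ae_restrict_of_forall_mem measurableSet_Ioo hpos),
    ← integral_Ioc_eq_integral_Ioo, ← intervalIntegral.integral_of_le hab,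
    intervalIntegral.integral_eq_sub_of_hasDerivAt_of_le hab hcont hderiv
      ((intervalIntegrable_iff_integrableOn_Ioc_of_le hab).2 hint)]

theorem mul_sqrt_sq_sub_sq_nonpos {a r : ℝ} (h : r ≤ a) : r * √(r ^ 2 - a ^ 2) ≤ 0 := by
  rcases le_or_gt r 0 with hr | hr
  · exact mul_nonpos_of_nonpos_of_nonneg hr (sqrt_nonneg _)
  · rw [sqrt_eq_zero_of_nonpos (by nlinarith), mul_zero]

theorem hasDerivAt_mul_sqrt_sq_sub_sq {a t : ℝ} (h : a ^ 2 < t ^ 2) :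
    HasDerivAt (fun t => t * √(t ^ 2 - a ^ 2)) ((2 * t ^ 2 - a ^ 2) / √(t ^ 2 - a ^ 2)) t := by
  have hpos : 0 < t ^ 2 - a ^ 2 := sub_pos.2 h
  have hsqrt : HasDerivAt (fun t => √(t ^ 2 - a ^ 2)) (2 * t / (2 * √(t ^ 2 - a ^ 2))) t := by
    simpa using ((hasDerivAt_pow 2 t).sub_const (a ^ 2)).sqrt hpos.ne'
  refine ((hasDerivAt_id' t).mul hsqrt).congr_deriv ?_
  have hs : √(t ^ 2 - a ^ 2) ^ 2 = t ^ 2 - a ^ 2 := sq_sqrt hpos.le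
  have : √(t ^ 2 - a ^ 2) ≠ 0 := (sqrt_pos.2 hpos).ne'
  field_simp
  linear_combination hs

theorem sqrt_add_sqrt_le_iff {a r p q : ℝ} (ha : 0 ≤ a) (har : a < r) :
    √((p + a / 2) ^ 2 + q ^ 2) + √((p - a / 2) ^ 2 + q ^ 2) ≤ r ↔
      (2 / r * p) ^ 2 + (2 / √(r ^ 2 - a ^ 2) * q) ^ 2 ≤ 1 := by
  have hra : 0 < r ^ 2 - a ^ 2 := by nlinarith
  have hr : 0 < r := ha.trans_lt har
  set A := √((p + a / 2) ^ 2 + q ^ 2)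
  set B := √((p - a / 2) ^ 2 + q ^ 2)
  have hA : A ^ 2 = (p + a / 2) ^ 2 + q ^ 2 := sq_sqrt (by positivity)
  have hB : B ^ 2 = (p - a / 2) ^ 2 + q ^ 2 := sq_sqrt (by positivity)
  have hA0 : 0 ≤ A := sqrt_nonneg _
  have hB0 : 0 ≤ B := sqrt_nonneg _
  have hnormal : (2 / r * p) ^ 2 + (2 / √(r ^ 2 - a ^ 2) * q) ^ 2 =
      4 * ((r ^ 2 - a ^ 2) * p ^ 2 + r ^ 2 * q ^ 2) / (r ^ 2 * (r ^ 2 - a ^ 2)) := by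
    rw [mul_pow, mul_pow, div_pow, div_pow, sq_sqrt hra.le]
    field_simp
    ring
  -- `A + B ≤ r` iff `2AB ≤ r² - A² - B²`, and squaring the latter gives the ellipse equation
  have key : (r ^ 2 - A ^ 2 - B ^ 2) ^ 2 - (2 * (A * B)) ^ 2 =
      r ^ 2 * (r ^ 2 - a ^ 2) - 4 * ((r ^ 2 - a ^ 2) * p ^ 2 + r ^ 2 * q ^ 2) := by
    rw [mul_pow, mul_pow, hA, hB]; ring
  rw [hnormal, div_le_one (by positivity)]
  constructor
  · intro h
    have h2 : 2 * (A * B) ≤ r ^ 2 - A ^ 2 - B ^ 2 := by nlinarith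
    nlinarith [mul_nonneg hA0 hB0]
  · intro h
    have hM : 0 ≤ r ^ 2 - A ^ 2 - B ^ 2 := by
      rw [hA, hB]; nlinarith [sq_nonneg p, sq_nonneg q, sq_nonneg a]
    have h2 : 2 * (A * B) ≤ r ^ 2 - A ^ 2 - B ^ 2 :=
      (pow_le_pow_iff_left₀ (by positivity) hM two_ne_zero).mp (by nlinarith)
    nlinarith

theorem EuclideanSpace.norm_fin_two (y : EuclideanSpace ℝ (Fin 2)) :
    ‖y‖ = √(y 0 ^ 2 + y 1 ^ 2) := by
  simp [EuclideanSpace.norm_eq, Fin.sum_univ_two]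

section EllipseRegion

variable {E : Type*} [SeminormedAddCommGroup E]

def ellipseRegion (x : E) (r : ℝ) : Set E := {y | ‖y‖ + ‖x - y‖ ≤ r}

theorem isClosed_ellipseRegion (x : E) (r : ℝ) : IsClosed (ellipseRegion x r) :=
  isClosed_le (by fun_prop) continuous_const

theorem ellipseRegion_mono (x : E) : Monotone (ellipseRegion x) :=
  fun _ _ h _ hy => hy.trans h

theorem ellipseRegion_eq_empty {x : E} {r : ℝ} (h : r < ‖x‖) : ellipseRegion x r = ∅ :=
  eq_empty_of_forall_notMem fun y hy => h.not_ge ((norm_le_norm_add_norm_sub' x y).trans hy)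

end EllipseRegion

theorem volume_ellipseRegion_eq_of_norm_eq {E : Type*} [NormedAddCommGroup E]
    [InnerProductSpace ℝ E] [FiniteDimensional ℝ E] [MeasurableSpace E] [BorelSpace E]
    {x x' : E} (h : ‖x‖ = ‖x'‖) (r : ℝ) :
    volume (ellipseRegion x r) = volume (ellipseRegion x' r) := by
  set R := (ℝ ∙ (x - x'))ᗮ.reflection
  have hR : ellipseRegion x r = R ⁻¹' ellipseRegion x' r := by
    ext y
    change _ ↔ ‖R y‖ + ‖x' - R y‖ ≤ r
    rw [← Submodule.reflection_sub h, ← map_sub, R.norm_map, R.norm_map]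
    rfl
  rw [hR, R.measurePreserving.measure_preimage (isClosed_ellipseRegion x' r).nullMeasurableSet]

theorem volume_ellipseRegion_single {a r : ℝ} (ha : 0 ≤ a) (har : a < r) :
    volume (ellipseRegion (EuclideanSpace.single 0 a : EuclideanSpace ℝ (Fin 2)) r) =
      ENNReal.ofReal (π * (r * √(r ^ 2 - a ^ 2)) / 4) := by
  have hr : 0 < r := ha.trans_lt har
  set b := √(r ^ 2 - a ^ 2)
  have hb : 0 < b := sqrt_pos.2 (by nlinarith)
  set L : EuclideanSpace ℝ (Fin 2) →ₗ[ℝ] EuclideanSpace ℝ (Fin 2) :=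
    Matrix.toLpLin 2 2 (Matrix.diagonal ![2 / r, 2 / b]) with hL
  have hdet : LinearMap.det L = 4 / (r * b) := by
    rw [hL, Matrix.toLpLin_eq_toLin, LinearMap.det_toLin, Matrix.det_diagonal, Fin.prod_univ_two]
    simp only [Matrix.cons_val_zero, Matrix.cons_val_one, Matrix.cons_val_fin_one]
    field_simp
    norm_num
  have hset : ellipseRegion (EuclideanSpace.single 0 a) r =
      (· + -EuclideanSpace.single 0 (a / 2)) ⁻¹' (L ⁻¹' Metric.closedBall 0 1) := by
    ext y
    simp only [ellipseRegion, mem_ofPred_eq, mem_preimage, Metric.mem_closedBall,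
      dist_zero_right, EuclideanSpace.norm_fin_two, sqrt_le_one, L, Matrix.toLpLin_apply,
      Matrix.mulVec_fin_two, WithLp.ofLp_add, WithLp.ofLp_neg, PiLp.ofLp_single, PiLp.sub_apply,
      Pi.add_apply, Pi.neg_apply, ne_eq, zero_ne_one, one_ne_zero, not_false_eq_true,
      PiLp.single_eq_same, PiLp.single_eq_of_ne, Pi.single_eq_same, Pi.single_eq_of_ne,
      Matrix.diagonal_apply_eq, Matrix.diagonal_apply_ne, Matrix.cons_val_zero,
      Matrix.cons_val_one, Matrix.cons_val_fin_one, zero_mul, add_zero, zero_add, neg_zero]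
    rw [← sqrt_add_sqrt_le_iff ha har]
    ring_nf
  rw [hset, measure_preimage_add_right,
    Measure.addHaar_preimage_linearMap _ (by rw [hdet]; positivity), hdet,
    EuclideanSpace.volume_closedBall_fin_two, inv_div, abs_of_pos (by positivity),
    ENNReal.ofReal_one, one_pow, one_mul, ← ENNReal.ofReal_mul (by positivity)]
  ring_nf

theorem volume_ellipseRegion_of_lt {x : EuclideanSpace ℝ (Fin 2)} {r : ℝ} (h : ‖x‖ < r) :
    volume (ellipseRegion x r) = ENNReal.ofReal (π * (r * √(r ^ 2 - ‖x‖ ^ 2)) / 4) := by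
  rw [volume_ellipseRegion_eq_of_norm_eq (x' := EuclideanSpace.single 0 ‖x‖) (by simp),
    volume_ellipseRegion_single (norm_nonneg x) h]

theorem volume_ellipseRegion_norm (x : EuclideanSpace ℝ (Fin 2)) :
    volume (ellipseRegion x ‖x‖) = 0 := by
  set G := fun r : ℝ => ENNReal.ofReal (π * (r * √(r ^ 2 - ‖x‖ ^ 2)) / 4)
  have hG : Tendsto G (𝓝[>] ‖x‖) (𝓝 (G ‖x‖)) :=
    (ENNReal.continuous_ofReal.comp (by fun_prop)).continuousWithinAt
  have hle : volume (ellipseRegion x ‖x‖) ≤ G ‖x‖ :=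
    ge_of_tendsto hG <| eventually_nhdsWithin_of_forall fun r hr =>
      (measure_mono (ellipseRegion_mono x hr.le)).trans_eq (volume_ellipseRegion_of_lt hr)
  simpa [G] using hle

theorem volume_ellipseRegion (x : EuclideanSpace ℝ (Fin 2)) (r : ℝ) :
    volume (ellipseRegion x r) = ENNReal.ofReal (π * (r * √(r ^ 2 - ‖x‖ ^ 2)) / 4) := by
  rcases lt_trichotomy r ‖x‖ with hlt | rfl | hgt
  · rw [ellipseRegion_eq_empty hlt, measure_empty, eq_comm, ENNReal.ofReal_eq_zero]
    nlinarith [mul_sqrt_sq_sub_sq_nonpos hlt.le, pi_pos]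
  · simp [volume_ellipseRegion_norm]
  · exact volume_ellipseRegion_of_lt hgt

theorem withDensity_Iic_eq_mul_sqrt_sq_sub_sq {a K : ℝ} (ha : 0 ≤ a) (hK : 0 ≤ K) (r : ℝ) :
    (volume.restrict (Ioi a)).withDensity
        (fun t => ENNReal.ofReal (K * (2 * t ^ 2 - a ^ 2) / √(t ^ 2 - a ^ 2))) (Iic r) =
      ENNReal.ofReal (K * (r * √(r ^ 2 - a ^ 2))) := by
  rw [withDensity_apply _ measurableSet_Iic, Measure.restrict_restrict measurableSet_Iic,
    inter_comm, Ioi_inter_Iic]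
  rcases le_or_gt r a with hra | har
  · rw [Ioc_eq_empty hra.not_gt, Measure.restrict_empty, lintegral_zero_measure, eq_comm,
      ENNReal.ofReal_eq_zero]
    exact mul_nonpos_of_nonneg_of_nonpos hK (mul_sqrt_sq_sub_sq_nonpos hra)
  · have hsq {t : ℝ} (ht : a < t) : a ^ 2 < t ^ 2 := by nlinarith
    have hderiv (t : ℝ) (ht : t ∈ Ioo a r) :
        HasDerivAt (fun t => K * (t * √(t ^ 2 - a ^ 2)))
          (K * (2 * t ^ 2 - a ^ 2) / √(t ^ 2 - a ^ 2)) t := by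
      rw [mul_div_assoc]
      exact (hasDerivAt_mul_sqrt_sq_sub_sq (hsq ht.1)).const_mul K
    rw [lintegral_ofReal_deriv_eq_sub har.le (by fun_prop) hderiv fun t ht => ?_]
    · simp
    · exact div_nonneg (mul_nonneg hK (by nlinarith [hsq ht.1])) (sqrt_nonneg _)

theorem map_norm_add_norm_sub_Iic (x : EuclideanSpace ℝ (Fin 2)) (mu : ℝ≥0) (r : ℝ) :
    ((mu : ℝ≥0∞) • volume).map (fun y => ‖y‖ + ‖x - y‖) (Iic r) =
      ENNReal.ofReal (mu * π / 4 * (r * √(r ^ 2 - ‖x‖ ^ 2))) := by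
  rw [Measure.map_apply (by fun_prop) measurableSet_Iic, Measure.smul_apply, smul_eq_mul]
  change _ * volume (ellipseRegion x r) = _
  rw [volume_ellipseRegion, ← ENNReal.ofReal_coe_nnreal, ← ENNReal.ofReal_mul mu.coe_nonneg]
  ring_nf

theorem map_norm_add_norm_sub_smul_volume (x : EuclideanSpace ℝ (Fin 2)) (mu : ℝ≥0) :
    ((mu : ℝ≥0∞) • volume).map (fun y => ‖y‖ + ‖x - y‖) =
      (volume.restrict (Ioi ‖x‖)).withDensity fun r =>
        ENNReal.ofReal ((mu * π / 4) * (2 * r ^ 2 - ‖x‖ ^ 2) / √(r ^ 2 - ‖x‖ ^ 2)) := by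
  refine Measure.ext_of_Iic' (fun r => ?_) (fun r => ?_)
  · rw [map_norm_add_norm_sub_Iic]
    exact ENNReal.ofReal_ne_top
  · rw [map_norm_add_norm_sub_Iic, withDensity_Iic_eq_mul_sqrt_sq_sub_sq (norm_nonneg x) (by positivity)]

theorem mapped_ellipse_process_is_Poisson_general
    {Ω : Type*} [MeasurableSpace Ω] (P : Measure Ω)
    (Ψ : Ω → Measure (EuclideanSpace ℝ (Fin 2))) (mu : ℝ≥0)
    (hΨ : IsPoissonPP P Ψ ((mu : ℝ≥0∞) • volume))
    (x : EuclideanSpace ℝ (Fin 2)) :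
    IsPoissonPP P (fun ω => (Ψ ω).map (fun y => ‖y‖ + ‖x - y‖))
      ((volume.restrict (Set.Ioi ‖x‖)).withDensity fun r =>
        ENNReal.ofReal ((mu * π / 4) * (2 * r ^ 2 - ‖x‖ ^ 2) / Real.sqrt (r ^ 2 - ‖x‖ ^ 2))) := by
  rw [← map_norm_add_norm_sub_smul_volume]
  exact hΨ.map (by fun_prop)

/-- For a stationary Poisson point process `Ψ` on `ℝ²` with intensity `μ` and a
fixed point `x ∈ ℝ²`, the point process `{‖y‖ + ‖x − y‖ : y ∈ Ψ}` on the real line is a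
Poisson point process on `[‖x‖, ∞)` with intensity function
`λ_x(r) = (μπ/4) (2r² − ‖x‖²)/√(r² − ‖x‖²)` for `r > ‖x‖`. -/
theorem mapped_ellipse_process_is_Poisson
    {Ω : Type*} [MeasurableSpace Ω] (P : Measure Ω) [IsProbabilityMeasure P]
    (Ψ : Ω → Measure (EuclideanSpace ℝ (Fin 2))) (mu : ℝ≥0)
    (hΨ : IsPoissonPP P Ψ ((mu : ℝ≥0∞) • volume))
    (x : EuclideanSpace ℝ (Fin 2)) :
    IsPoissonPP P (fun ω => (Ψ ω).map (fun y => ‖y‖ + ‖x - y‖))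
      ((volume.restrict (Set.Ioi ‖x‖)).withDensity fun r =>
        ENNReal.ofReal ((mu * π / 4) * (2 * r ^ 2 - ‖x‖ ^ 2) / Real.sqrt (r ^ 2 - ‖x‖ ^ 2))) :=
  mapped_ellipse_process_is_Poisson_general P Ψ mu hΨ x
end

section
/- The integral identity ∫_c^∞ (2r² − c²)/√(r² − c²) · e^{−r/θ} dr = c²·(2θ K₁(c/θ)/c + K₀(c/θ)) holds for all c, θ > 0, where K₀ and K₁ are modified Bessel functions of the second kind. -/
open MeasureTheory Real

/-- Modified Bessel function of the second kind `K₀`, via its integral representation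
`K₀(z) = ∫₁^∞ e^{−zt}/√(t²−1) dt`. -/
noncomputable def besselK0 (z : ℝ) : ℝ :=
  ∫ t in Set.Ioi (1 : ℝ), Real.exp (-z * t) / Real.sqrt (t ^ 2 - 1)

/-- Modified Bessel function of the second kind `K₁`, via `∫₁^∞ √(t²−1) e^{−zt} dt = K₁(z)/z`. -/
noncomputable def besselK1 (z : ℝ) : ℝ :=
  z * ∫ t in Set.Ioi (1 : ℝ), Real.sqrt (t ^ 2 - 1) * Real.exp (-z * t)

/-! Substituting `r = c t` turns the integral into `c ∫₁^∞ (2c²t² − c²)/(c√(t² − 1)) e^{−zt} dt`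
with `z = c/θ`, and `2t² − 1 = 2(t² − 1) + 1` splits the integrand into
`c (2√(t² − 1) + 1/√(t² − 1)) e^{−zt}`, whose two pieces are the integrals defining `K₁(z)/z`
and `K₀(z)`. -/

lemma integrableOn_sqrt_sq_sub_one_mul_exp {z : ℝ} (hz : 0 < z) :
    IntegrableOn (fun t : ℝ => √(t ^ 2 - 1) * exp (-z * t)) (Set.Ioi 1) := by
  have hdom : IntegrableOn (fun t : ℝ => t * exp (-z * t)) (Set.Ioi 1) := by
    simpa only [rpow_one] using (integrableOn_rpow_mul_exp_neg_mul_rpow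
      (s := 1) (p := 1) (by norm_num) one_pos hz).mono_set (Set.Ioi_subset_Ioi zero_le_one)
  refine hdom.mono' (by fun_prop) ?_
  filter_upwards [ae_restrict_mem measurableSet_Ioi] with t (ht : 1 < t)
  rw [norm_of_nonneg (by positivity)]
  gcongr
  calc √(t ^ 2 - 1) ≤ √(t ^ 2) := sqrt_le_sqrt (by linarith)
    _ = t := sqrt_sq (by linarith)

lemma integrableOn_exp_div_sqrt_sq_sub_one {z : ℝ} (hz : 0 < z) :
    IntegrableOn (fun t : ℝ => exp (-z * t) / √(t ^ 2 - 1)) (Set.Ioi 1) := by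
  -- a Gamma-type integrand shifted to `Ioi 1`
  have hdom : IntegrableOn (fun t : ℝ => (t - 1) ^ (-(1 / 2) : ℝ) * exp (-z * (t - 1)))
      (Set.Ioi 1) := by
    have h := integrableOn_rpow_mul_exp_neg_mul_rpow (s := -(1 / 2)) (p := 1)
      (by norm_num) one_pos hz
    simp only [rpow_one] at h
    rw [← (measurePreserving_sub_right volume (1 : ℝ)).integrableOn_comp_preimage
      (measurableEmbedding_subRight 1)] at h
    simpa [Function.comp_def] using h
  refine hdom.mono' (Measurable.aestronglyMeasurable (by fun_prop)) ?_
  filter_upwards [ae_restrict_mem measurableSet_Ioi] with t (ht : 1 < t)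
  rw [norm_of_nonneg (by positivity), rpow_neg (by linarith), ← sqrt_eq_rpow, div_eq_inv_mul]
  gcongr ?_ * ?_
  · exact inv_anti₀ (sqrt_pos.2 (by linarith)) (sqrt_le_sqrt (by nlinarith))
  · exact exp_le_exp.2 (by nlinarith)

lemma two_mul_sq_sub_sq_div_sqrt_sq_sub_sq {c t : ℝ} (hc : 0 < c) (ht : 1 < t) :
    (2 * (c * t) ^ 2 - c ^ 2) / √((c * t) ^ 2 - c ^ 2)
      = c * (2 * √(t ^ 2 - 1) + 1 / √(t ^ 2 - 1)) := by
  have hpos : 0 < t ^ 2 - 1 := by nlinarith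
  have hs : 0 < √(t ^ 2 - 1) := sqrt_pos.2 hpos
  rw [show (c * t) ^ 2 - c ^ 2 = c ^ 2 * (t ^ 2 - 1) by ring, sqrt_mul (sq_nonneg c),
    sqrt_sq hc.le]
  field_simp
  rw [sq_sqrt hpos.le]
  ring

/-- For all `c, θ > 0`,
`∫_c^∞ (2r² − c²)/√(r² − c²) · e^{−r/θ} dr = c² (2θ K₁(c/θ)/c + K₀(c/θ))`. -/
theorem ellipse_intensity_integral_bessel (c θ : ℝ) (hc : 0 < c) (hθ : 0 < θ) :
    ∫ r in Set.Ioi c, (2 * r ^ 2 - c ^ 2) / Real.sqrt (r ^ 2 - c ^ 2) * Real.exp (-r / θ)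
      = c ^ 2 * (2 * θ * besselK1 (c / θ) / c + besselK0 (c / θ)) := by
  set z := c / θ
  have hz : 0 < z := div_pos hc hθ
  have hscale : ∀ t ∈ Set.Ioi (1 : ℝ),
      (2 * (c * t) ^ 2 - c ^ 2) / √((c * t) ^ 2 - c ^ 2) * exp (-(c * t) / θ)
        = c * (2 * (√(t ^ 2 - 1) * exp (-z * t)) + exp (-z * t) / √(t ^ 2 - 1)) := by
    intro t (ht : 1 < t)
    rw [two_mul_sq_sub_sq_div_sqrt_sq_sub_sq hc ht, show -(c * t) / θ = -z * t by ring]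
    ring
  have hrescale := integral_comp_mul_left_Ioi'
    (fun r => (2 * r ^ 2 - c ^ 2) / √(r ^ 2 - c ^ 2) * exp (-r / θ)) 1 hc
  rw [mul_one] at hrescale
  rw [← hrescale, smul_eq_mul,
    setIntegral_congr_fun measurableSet_Ioi hscale, integral_const_mul,
    integral_add ((integrableOn_sqrt_sq_sub_one_mul_exp hz).const_mul 2)
      (integrableOn_exp_div_sqrt_sq_sub_one hz), integral_const_mul, besselK0, besselK1]
  simp only [z]
  field_simp
end
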